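/- arXiv:2509.05745 — 5 statements merged into one kernel-verified Lean document; each statement's English description precedes it below -/
import Mathlib

section
/- Let φ : Γ → Λ be a homomorphism of groups, let Γ' be a subgroup of Γ and Λ' a subgroup of Λ such that φ(Γ') ⊆ Λ', and let φ' : Γ' → Λ' be the restriction of φ. Then for every natural number k, if there exists a ℤΛ'-module M such that the induced map φ'^* : H^k(Λ'; M) → H^k(Γ'; M) in group cohomology is nonzero, then there exists a ℤΛ-module N such that the induced map φ^* : H^k(Λ; N) → H^k(Γ; N) is nonzero. (In particular cd(φ') ≤ cd(φ).) -/
open CategoryTheory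

/-- Restriction of a representation along a group homomorphism `f : G →* H`: the same module,
with `G` acting via `f`. -/
noncomputable def resRep {k G H : Type} [CommRing k] [Group G] [Group H] (f : G →* H)
    (A : Rep.{0} k H) : Rep.{0} k G :=
  Rep.res f A

/-- The map of inhomogeneous cochain complexes induced by a group homomorphism `f : G →* H`,
given in degree `n` by precomposition `c ↦ c ∘ (f ∘ ·)`. -/
noncomputable def cochainsMap {k G H : Type} [CommRing k] [Group G] [Group H] (f : G →* H)
    (A : Rep.{0} k H) :
    groupCohomology.inhomogeneousCochains A ⟶
      groupCohomology.inhomogeneousCochains (resRep f A) where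
  f n := show ModuleCat.of k ((Fin n → H) → A) ⟶ ModuleCat.of k ((Fin n → G) → A) from
    ModuleCat.ofHom (LinearMap.funLeft k A fun (g : Fin n → G) => f ∘ g)
  comm' i j hij := by
    subst hij
    ext (x : (Fin i → H) → A) (g : Fin (i + 1) → G)
    simp only [CochainComplex.of.d, ↓reduceDIte, eqToHom_refl, Category.comp_id]
    show (inhomogeneousCochains.d (resRep f A) i).hom (fun p => x (f ∘ p)) g
      = (inhomogeneousCochains.d A i).hom x (f ∘ g)
    simp only [inhomogeneousCochains.d_hom_apply]
    erw [inhomogeneousCochains.d_hom_apply]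
    simp [resRep, Fin.comp_contractNth]
    rfl

/-- The induced map `f^* : H^n(H; A) → H^n(G; res_f A)` on group cohomology. -/
noncomputable def cohomologyMap {k G H : Type} [CommRing k] [Group G] [Group H] (f : G →* H)
    (A : Rep.{0} k H) (n : ℕ) : groupCohomology A n ⟶ groupCohomology (resRep f A) n :=
  HomologicalComplex.homologyMap (cochainsMap f A) n

namespace Stmt0Aux

theorem ratio_partialProd {G : Type*} [Group G] {n : ℕ} (Q : Fin (n + 1) → G) (m : Fin (n + 1)) :
    Fin.partialProd (fun k : Fin n => (Q k.castSucc)⁻¹ * Q k.succ) m = (Q 0)⁻¹ * Q m := by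
  induction m using Fin.induction with
  | zero => simp
  | succ m ih => rw [Fin.partialProd_succ, ih, mul_assoc, mul_inv_cancel_left]

theorem contractNth_ratio {G : Type*} [Group G] {n : ℕ} (Q : Fin (n + 2) → G) (j : Fin (n + 1))
    (k : Fin n) :
    Fin.contractNth j (· * ·) (fun m : Fin (n + 1) => (Q m.castSucc)⁻¹ * Q m.succ) k
      = (Q (j.succ.succAbove k.castSucc))⁻¹ * Q (j.succ.succAbove k.succ) := by
  rw [Fin.succ_succAbove_succ,
    ← Fin.inv_partialProd_mul_eq_contractNth (fun m : Fin (n + 1) => (Q m.castSucc)⁻¹ * Q m.succ) j k,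
    ratio_partialProd, ratio_partialProd]
  group

theorem partialProd_contractNth {G : Type*} [Group G] {n : ℕ} (g : Fin (n + 1) → G)
    (j : Fin (n + 1)) (m : Fin (n + 1)) :
    Fin.partialProd (Fin.contractNth j (· * ·) g) m = Fin.partialProd g (j.succ.succAbove m) := by
  induction m using Fin.induction with
  | zero => rw [Fin.partialProd_zero, Fin.succ_succAbove_zero, Fin.partialProd_zero]
  | succ m ih =>
    rw [Fin.partialProd_succ, ih, Fin.succ_succAbove_succ,
      ← Fin.inv_partialProd_mul_eq_contractNth g j m, mul_inv_cancel_left]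

theorem partialProd_hom {M N : Type*} [Monoid M] [Monoid N] (f : M →* N) {n : ℕ}
    (g : Fin n → M) (m : Fin (n + 1)) :
    Fin.partialProd (fun i => f (g i)) m = f (Fin.partialProd g m) := by
  induction m using Fin.induction with
  | zero => simp
  | succ m ih => rw [Fin.partialProd_succ, ih, Fin.partialProd_succ, map_mul]

theorem partialProd_coe {G : Type*} [Group G] (H : Subgroup G) {n : ℕ} (f : Fin n → H)
    (m : Fin (n + 1)) :
    Fin.partialProd (fun i => ((f i : G))) m = ((Fin.partialProd f m : H) : G) := by
  induction m using Fin.induction with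
  | zero => simp
  | succ m ih => simp [Fin.partialProd_succ, ih]

variable {k Λ : Type} [CommRing k] [Group Λ]

noncomputable def pfun (Λ' : Subgroup Λ) (x : Λ) : Λ' :=
  ⟨x * (QuotientGroup.mk x⁻¹ : Λ ⧸ Λ').out, by
    have h : (QuotientGroup.mk ((QuotientGroup.mk x⁻¹ : Λ ⧸ Λ').out) : Λ ⧸ Λ')
        = QuotientGroup.mk x⁻¹ := QuotientGroup.out_eq' _
    rw [QuotientGroup.eq] at h
    simpa [mul_inv_rev] using Λ'.inv_mem h⟩

theorem pfun_mul (Λ' : Subgroup Λ) (l' : Λ') (x : Λ) :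
    pfun Λ' (↑l' * x) = l' * pfun Λ' x := by
  apply Subtype.ext
  show (↑l' * x) * _ = ↑l' * (x * _)
  rw [mul_inv_rev, mul_assoc]
  congr 2
  exact congrArg Quotient.out (QuotientGroup.mk_mul_of_mem x⁻¹ (Λ'.inv_mem l'.2))

noncomputable def pnorm (Λ' : Subgroup Λ) (x : Λ) : Λ' :=
  pfun Λ' x * (pfun Λ' 1)⁻¹

theorem pnorm_mul (Λ' : Subgroup Λ) (l' : Λ') (x : Λ) :
    pnorm Λ' (↑l' * x) = l' * pnorm Λ' x := by
  rw [pnorm, pnorm, pfun_mul, mul_assoc]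

theorem pnorm_one (Λ' : Subgroup Λ) : pnorm Λ' 1 = 1 := mul_inv_cancel _

theorem pnorm_coe (Λ' : Subgroup Λ) (l' : Λ') : pnorm Λ' ↑l' = l' := by
  have := pnorm_mul Λ' l' 1
  rwa [mul_one, pnorm_one, mul_one] at this

variable (k) (Λ' : Subgroup Λ) (M : Rep.{0} k Λ')

noncomputable def coindV : Submodule k (Λ → M) where
  carrier := {f | ∀ (s : Λ') (x : Λ), f (↑s * x) = M.ρ s (f x)}
  add_mem' := fun hf hg s x => by
    simp only [Pi.add_apply, hf s x, hg s x, map_add]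
  zero_mem' := fun s x => by simp
  smul_mem' := fun r f hf s x => by
    simp only [Pi.smul_apply, hf s x, map_smul]

noncomputable def coind : Rep.{0} k Λ :=
  Rep.of (X := coindV k Λ' M)
    { toFun := fun a =>
        { toFun := fun f => ⟨fun x => f.1 (x * a), fun s x => by
            have := f.2 s (x * a)
            simpa [mul_assoc] using this⟩
          map_add' := fun f g => rfl
          map_smul' := fun r f => rfl }
      map_one' := by
        ext f x
        simp
      map_mul' := fun a b => by
        ext f x
        simp [mul_assoc] }

noncomputable def tAux (n : ℕ) (c : (Fin n → Λ') → M) (g : Fin n → Λ) : coindV k Λ' M :=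
  ⟨fun x => M.ρ (pnorm Λ' x)
      (c fun j => (pnorm Λ' (x * Fin.partialProd g j.castSucc))⁻¹ *
        pnorm Λ' (x * Fin.partialProd g j.succ)), by
    intro s x
    have h : ∀ y : Λ, pnorm Λ' (↑s * x * y) = s * pnorm Λ' (x * y) := fun y => by
      rw [mul_assoc, pnorm_mul]
    have harg : (fun j : Fin n => (pnorm Λ' (↑s * x * Fin.partialProd g j.castSucc))⁻¹ *
        pnorm Λ' (↑s * x * Fin.partialProd g j.succ))
        = fun j : Fin n => (pnorm Λ' (x * Fin.partialProd g j.castSucc))⁻¹ *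
          pnorm Λ' (x * Fin.partialProd g j.succ) := by
      funext j
      rw [h, h, mul_inv_rev, mul_assoc, inv_mul_cancel_left]
    show M.ρ (pnorm Λ' (↑s * x)) _ = _
    rw [harg, pnorm_mul, map_mul]
    rfl⟩

theorem tAux_coe (n : ℕ) (c : (Fin n → Λ') → M) (g : Fin n → Λ) (x : Λ) :
    (tAux k Λ' M n c g).1 x = M.ρ (pnorm Λ' x)
      (c fun j => (pnorm Λ' (x * Fin.partialProd g j.castSucc))⁻¹ *
        pnorm Λ' (x * Fin.partialProd g j.succ)) := rfl

theorem coind_ρ_apply (a : Λ) (f : coindV k Λ' M) (x : Λ) :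
    (((coind k Λ' M).ρ a) f).1 x = f.1 (x * a) := rfl

theorem coindV_add_apply (a b : coindV k Λ' M) (x : Λ) : (a + b).1 x = a.1 x + b.1 x := rfl

theorem coindV_smul_apply (r : k) (a : coindV k Λ' M) (x : Λ) : (r • a).1 x = r • a.1 x := rfl

theorem coindV_sum_apply {ι : Type} (s : Finset ι) (f : ι → coindV k Λ' M) (x : Λ) :
    (∑ j ∈ s, f j).1 x = ∑ j ∈ s, (f j).1 x := by
  classical
  induction s using Finset.induction_on with
  | empty => rfl
  | insert _ _ h ih => rw [Finset.sum_insert h, Finset.sum_insert h, coindV_add_apply, ih]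

noncomputable def tLin (n : ℕ) :
    ((Fin n → Λ') → M) →ₗ[k] ((Fin n → Λ) → coindV k Λ' M) where
  toFun c g := tAux k Λ' M n c g
  map_add' c c' := by
    funext g
    apply Subtype.ext
    funext x
    show M.ρ _ ((c + c') _) = ((tAux k Λ' M n c g : Λ → M) + (tAux k Λ' M n c' g : Λ → M)) x
    rw [Pi.add_apply, Pi.add_apply, map_add, tAux_coe, tAux_coe]
  map_smul' r c := by
    funext g
    apply Subtype.ext
    funext x
    show M.ρ _ ((r • c) _) = (r • (tAux k Λ' M n c g : Λ → M)) x
    rw [Pi.smul_apply, Pi.smul_apply, map_smul, tAux_coe]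

noncomputable def tMap : groupCohomology.inhomogeneousCochains M ⟶
    groupCohomology.inhomogeneousCochains (coind k Λ' M) where
  f n := show ModuleCat.of k ((Fin n → Λ') → M) ⟶ ModuleCat.of k ((Fin n → Λ) → coindV k Λ' M) from
    ModuleCat.ofHom (tLin k Λ' M n)
  comm' i j hij := by
    subst hij
    ext (c : (Fin i → Λ') → M) (g : Fin (i + 1) → Λ)
    simp only [CochainComplex.of.d, ↓reduceDIte, eqToHom_refl, Category.comp_id]
    apply Subtype.ext
    funext (x : Λ)
    show ((inhomogeneousCochains.d (coind k Λ' M) i).hom (tLin k Λ' M i c) g).1 x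
      = (tAux k Λ' M (i + 1) ((inhomogeneousCochains.d M i).hom c) g).1 x
    have tLin_apply : ∀ (c : (Fin i → Λ') → M) (g : Fin i → Λ),
        tLin k Λ' M i c g = tAux k Λ' M i c g := fun _ _ => rfl
    erw [inhomogeneousCochains.d_hom_apply, tAux_coe, inhomogeneousCochains.d_hom_apply]
    simp only [tLin_apply]
    erw [coindV_add_apply, coindV_sum_apply]
    simp only [coindV_smul_apply, map_add, map_sum, map_smul, coind_ρ_apply, tAux_coe]
    congr 1
    · have key : ∀ m : Fin (i + 1), x * g 0 * Fin.partialProd (fun l => g l.succ) m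
          = x * Fin.partialProd g m.succ := fun m => by
        rw [Fin.partialProd_succ', ← mul_assoc]
        rfl
      simp only [key]
      rw [← Module.End.mul_apply, ← map_mul]
      have harg : (fun j : Fin i =>
            (pnorm Λ' (x * Fin.partialProd g j.castSucc.succ))⁻¹ *
              pnorm Λ' (x * Fin.partialProd g j.succ.succ))
          = fun j : Fin i =>
            (pnorm Λ' (x * Fin.partialProd g j.succ.castSucc))⁻¹ *
              pnorm Λ' (x * Fin.partialProd g j.succ.succ) := by
        funext j
        rw [Fin.castSucc_fin_succ]
      rw [harg]
      congr 1
      simp only [Fin.castSucc_zero, Fin.partialProd_zero, mul_one, Fin.partialProd_succ,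
        one_mul, mul_inv_cancel_left]
    · refine Finset.sum_congr rfl fun j _ => ?_
      erw [coindV_smul_apply, tAux_coe]
      refine congrArg _ (congrArg _ (congrArg c (funext fun kk => ?_)))
      rw [partialProd_contractNth, partialProd_contractNth]
      exact (contractNth_ratio (fun m => pnorm Λ' (x * Fin.partialProd g m)) j kk).symm

variable {Γ : Type} [Group Γ] (φ : Γ →* Λ) (Γ' : Subgroup Γ) (hφ : ∀ x : Γ', φ ↑x ∈ Λ')

noncomputable def vMap :
    groupCohomology.inhomogeneousCochains (resRep φ (coind k Λ' M)) ⟶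
      groupCohomology.inhomogeneousCochains (resRep ((φ.domRestrict Γ').codRestrict Λ' hφ) M) where
  f n := show ModuleCat.of k ((Fin n → Γ) → coindV k Λ' M) ⟶ ModuleCat.of k ((Fin n → Γ') → M) from
    ModuleCat.ofHom
    { toFun := fun c g => (c fun l => (g l : Γ)).1 1
      map_add' := fun a b => funext fun g => rfl
      map_smul' := fun r a => funext fun g => rfl }
  comm' i j hij := by
    subst hij
    ext (c : (Fin i → Γ) → coindV k Λ' M) (g : Fin (i + 1) → Γ')
    simp only [CochainComplex.of.d, ↓reduceDIte, eqToHom_refl, Category.comp_id]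
    show (inhomogeneousCochains.d (resRep ((φ.domRestrict Γ').codRestrict Λ' hφ) M) i).hom
        (fun (g : Fin i → Γ') => (c fun l => (g l : Γ)).1 1) g
      = ((inhomogeneousCochains.d (resRep φ (coind k Λ' M)) i).hom c (fun l => (g l : Γ))).1 1
    erw [inhomogeneousCochains.d_hom_apply, inhomogeneousCochains.d_hom_apply]
    erw [coindV_add_apply, coindV_sum_apply]
    congr 1
    · have hmem := (c fun l => ((g l.succ : Γ))).2 (((φ.domRestrict Γ').codRestrict Λ' hφ) (g 0)) 1
      show M.ρ (((φ.domRestrict Γ').codRestrict Λ' hφ) (g 0)) ((c fun l => ((g l.succ : Γ') : Γ)).1 1)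
        = (c fun l => ((g l.succ : Γ') : Γ)).1 (1 * φ ↑(g 0))
      rw [← hmem, mul_one, one_mul]
      rfl
    · refine Finset.sum_congr rfl fun j _ => ?_
      erw [coindV_smul_apply]
      have harg : (fun l => ((Fin.contractNth j (· * ·) g l : Γ') : Γ))
          = Fin.contractNth j (· * ·) (fun l => ((g l : Γ') : Γ)) := by
        funext l
        simp only [Fin.contractNth]
        split_ifs <;> simp
      rw [harg]
      rfl

theorem keyFact :
    cochainsMap ((φ.domRestrict Γ').codRestrict Λ' hφ) M
      = tMap k Λ' M ≫ cochainsMap φ (coind k Λ' M) ≫ vMap k Λ' M φ Γ' hφ := by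
  ext n : 1
  show (cochainsMap ((φ.domRestrict Γ').codRestrict Λ' hφ) M).f n
    = (tMap k Λ' M ≫ cochainsMap φ (coind k Λ' M) ≫ vMap k Λ' M φ Γ' hφ).f n
  simp only [HomologicalComplex.comp_f]
  ext (c : (Fin n → Λ') → M) (g : Fin n → Γ')
  show c ((((φ.domRestrict Γ').codRestrict Λ' hφ)) ∘ g)
    = (tAux k Λ' M n c (fun l => ((((φ.domRestrict Γ').codRestrict Λ' hφ) (g l) : Λ') : Λ))).1 1
  rw [tAux_coe]
  have harg : (fun j : Fin n =>
        (pnorm Λ' (1 * Fin.partialProd (fun l =>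
          ((((φ.domRestrict Γ').codRestrict Λ' hφ) (g l) : Λ') : Λ)) j.castSucc))⁻¹ *
          pnorm Λ' (1 * Fin.partialProd (fun l =>
            ((((φ.domRestrict Γ').codRestrict Λ' hφ) (g l) : Λ') : Λ)) j.succ))
      = fun j : Fin n => ((φ.domRestrict Γ').codRestrict Λ' hφ) (g j) := by
    funext j
    rw [one_mul, one_mul, partialProd_coe, partialProd_coe, pnorm_coe, pnorm_coe,
      Fin.partialProd_right_inv]
  rw [harg, pnorm_one, map_one, Module.End.one_apply]
  rfl

end Stmt0Aux

/-- If `φ' : Γ' → Λ'` is the restriction of a group homomorphism `φ : Γ → Λ`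
to subgroups `Γ' ≤ Γ`, `Λ' ≤ Λ` with `φ(Γ') ⊆ Λ'`, then for every `k`, if there is a
`ℤΛ'`-module `M` with `φ'^* : H^k(Λ'; M) → H^k(Γ'; M)` nonzero, then there is a `ℤΛ`-module `N`
with `φ^* : H^k(Λ; N) → H^k(Γ; N)` nonzero.  (In particular `cd(φ') ≤ cd(φ)`.) -/
theorem stmt0 {Γ Λ : Type} [Group Γ] [Group Λ] (φ : Γ →* Λ)
    (Γ' : Subgroup Γ) (Λ' : Subgroup Λ) (hφ : ∀ x : Γ', φ ↑x ∈ Λ') (k : ℕ)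
    (h : ∃ M : Rep.{0} ℤ Λ',
      cohomologyMap ((φ.domRestrict Γ').codRestrict Λ' hφ) M k ≠ 0) :
    ∃ N : Rep.{0} ℤ Λ, cohomologyMap φ N k ≠ 0 := by
  obtain ⟨M, hM⟩ := h
  refine ⟨Stmt0Aux.coind ℤ Λ' M, fun h0 => hM ?_⟩
  have hkey := Stmt0Aux.keyFact ℤ Λ' M φ Γ' hφ
  show HomologicalComplex.homologyMap (cochainsMap ((φ.domRestrict Γ').codRestrict Λ' hφ) M) k = 0
  have h0' : HomologicalComplex.homologyMap (cochainsMap φ (Stmt0Aux.coind ℤ Λ' M)) k = 0 := h0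
  rw [hkey, HomologicalComplex.homologyMap_comp, HomologicalComplex.homologyMap_comp, h0']
  simp
end

section
/- Let f : X → Y be a continuous map of topological spaces, let r ≥ 2, and let U ⊆ X^r. If the restriction of f^r = f × ⋯ × f to U can be deformed into the diagonal ΔY of Y^r (i.e. there is a homotopy H : U × [0,1] → Y^r with H(x̄, 0) = f^r(x̄) and H(x̄, 1) ∈ ΔY for all x̄ ∈ U), then there exists a sequential f-motion planner on U, i.e. a continuous map f_U : U → Y^{[0,1]} (into the path space of Y with the compact-open topology) satisfying f_U(x_0, …, x_{r-1})(j/(r-1)) = f(x_j) for all (x_0, …, x_{r-1}) ∈ U and all j = 0, …, r-1. -/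
/-- The time `j / (r - 1)` in the unit interval, for `j : Fin r` and `2 ≤ r`. -/
noncomputable def seqTime {r : ℕ} (hr : 2 ≤ r) (j : Fin r) : unitInterval :=
  ⟨((j : ℕ) : ℝ) / ((r : ℝ) - 1), by
    have h2 : (2 : ℝ) ≤ (r : ℝ) := by exact_mod_cast hr
    have hj : ((j : ℕ) : ℝ) + 1 ≤ (r : ℝ) := by exact_mod_cast j.isLt
    constructor
    · exact div_nonneg (Nat.cast_nonneg _) (by linarith)
    · rw [div_le_one (by linarith)]; linarith⟩

/-- The `j`-th coordinate map `U → Y`, `x̄ ↦ f (x̄ j)`, of `f^r` on a subset `U ⊆ X^r`. -/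
def coordMap {X Y : Type*} [TopologicalSpace X] [TopologicalSpace Y] (f : C(X, Y)) {r : ℕ}
    (U : Set (Fin r → X)) (j : Fin r) : C(U, Y) :=
  ⟨fun u => f (u.1 j), f.continuous.comp ((continuous_apply j).comp continuous_subtype_val)⟩

/-- If `f^r|_U` can be deformed into the diagonal `ΔY ⊆ Y^r` (for
`U ⊆ X^r`, `r ≥ 2`), then there is a sequential `f`-motion planner on `U`, i.e. a
continuous `F : U → Y^{[0,1]}` with `F x̄ (j/(r-1)) = f (x̄ j)` for all `j`. -/
theorem stmt9 {X Y : Type*} [TopologicalSpace X] [TopologicalSpace Y] (f : C(X, Y))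
    {r : ℕ} (hr : 2 ≤ r) (U : Set (Fin r → X))
    (H : C(U × unitInterval, Fin r → Y))
    (hH0 : ∀ u : U, H (u, 0) = fun j => f (u.1 j))
    (hH1 : ∀ u : U, ∃ y : Y, H (u, 1) = fun _ => y) :
    ∃ F : C(U, C(unitInterval, Y)),
      ∀ (u : U) (j : Fin r), F u (seqTime hr j) = f (u.1 j) := by
  classical
  set n : ℕ := r - 1 with hn
  have hrn : r = n + 1 := by omega
  have hn1 : 1 ≤ n := by omega
  have hnR : (0:ℝ) < n := by exact_mod_cast hn1
  -- the rescaled time parameter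
  set x : U × unitInterval → ℝ := fun p => (p.2 : ℝ) * (2 * n) with hxdef
  have hxcont : Continuous x :=
    (continuous_subtype_val.comp continuous_snd).mul continuous_const
  have hx0 : ∀ p, 0 ≤ x p := fun p => mul_nonneg p.2.2.1 (by positivity)
  have hx2n : ∀ p, x p ≤ 2 * n := fun p => by
    have h1 : (p.2 : ℝ) ≤ 1 := p.2.2.2
    have h2 : x p = (p.2 : ℝ) * (2 * n) := rfl
    nlinarith [p.2.2.1, hnR.le]
  -- floor bound
  have hfloor_le : ∀ p, ⌊(x p + 1) / 2⌋₊ ≤ n := by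
    intro p
    have h2 : (x p + 1) / 2 < (n : ℝ) + 1 := by
      have := hx2n p; linarith
    have h0 : (0:ℝ) ≤ (x p + 1) / 2 := by have := hx0 p; linarith
    have : ⌊(x p + 1) / 2⌋₊ < n + 1 := by
      rw [Nat.floor_lt h0]; push_cast; linarith
    omega
  have hidx_lt : ∀ p : U × unitInterval, min (⌊(x p + 1) / 2⌋₊) n < r := fun p => by omega
  set idx : U × unitInterval → Fin r := fun p => ⟨min (⌊(x p + 1) / 2⌋₊) n, hidx_lt p⟩
    with hidxdef
  have hidx_val : ∀ p, ((idx p : Fin r) : ℕ) = ⌊(x p + 1) / 2⌋₊ := fun p => by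
    simp only [hidxdef]
    exact Nat.min_eq_left (hfloor_le p)
  -- the coordinate-wise out-and-back maps
  set g : Fin r → U × unitInterval → Y := fun j p =>
    H (p.1, Set.projIcc (0:ℝ) 1 zero_le_one |x p - 2 * ((j : ℕ) : ℝ)|) j with hgdef
  have hg : ∀ j : Fin r, Continuous (g j) := fun j =>
    (continuous_apply j).comp <| H.continuous.comp <|
      continuous_fst.prodMk <| continuous_projIcc.comp
        ((hxcont.sub continuous_const).abs)
  set K : U × unitInterval → Y := fun p => g (idx p) p with hKdef
  -- membership in own piece
  have hmem : ∀ p, |x p - 2 * ((⌊(x p + 1) / 2⌋₊ : ℕ) : ℝ)| ≤ 1 := by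
    intro p
    have h0 : (0:ℝ) ≤ (x p + 1) / 2 := by have := hx0 p; linarith
    have hle := Nat.floor_le h0
    have hlt := Nat.lt_floor_add_one ((x p + 1) / 2)
    rw [abs_le]; constructor <;> linarith
  -- agreement: on the piece of j, K equals g j
  have key : ∀ (j : Fin r) (p : U × unitInterval),
      |x p - 2 * ((j : ℕ) : ℝ)| ≤ 1 → K p = g j p := by
    intro j p hp
    rw [abs_le] at hp
    have hjn : (j : ℕ) ≤ n := by have := j.isLt; omega
    have h0 : (0:ℝ) ≤ (x p + 1) / 2 := by have := hx0 p; linarith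
    rcases lt_or_eq_of_le hp.2 with hlt | heq
    · -- interior of piece: indices coincide
      have hm : ⌊(x p + 1) / 2⌋₊ = (j : ℕ) := by
        rw [Nat.floor_eq_iff h0]
        constructor <;> [skip; skip] <;> push_cast <;>
          [linarith [hp.1]; linarith]
      have : idx p = j := by
        apply Fin.ext
        rw [hidx_val p, hm]
      show g (idx p) p = g j p
      rw [this]
    · -- boundary: both values lie on the diagonal
      have hxeq : x p = 2 * ((j : ℕ) : ℝ) + 1 := by linarith
      have hjlt : (j : ℕ) < n := by
        by_contra h
        have hjn' : (j : ℕ) = n := by omega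
        have := hx2n p
        rw [hxeq, hjn'] at this
        linarith
      have hm : ⌊(x p + 1) / 2⌋₊ = (j : ℕ) + 1 := by
        rw [Nat.floor_eq_iff h0]
        constructor <;> push_cast <;> rw [hxeq] <;> [linarith; linarith]
      have hidxp : ((idx p : Fin r) : ℕ) = (j : ℕ) + 1 := by rw [hidx_val p, hm]
      obtain ⟨y, hy⟩ := hH1 p.1
      have habs1 : |x p - 2 * (((idx p : Fin r) : ℕ) : ℝ)| = 1 := by
        rw [hidxp, hxeq]; push_cast; rw [abs_of_nonpos (by linarith)]; ring
      have habs2 : |x p - 2 * ((j : ℕ) : ℝ)| = 1 := by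
        rw [hxeq]; rw [abs_of_nonneg (by linarith)]; ring
      have hproj1 : Set.projIcc (0:ℝ) 1 zero_le_one (1:ℝ) = (1 : unitInterval) := by
        exact Set.projIcc_right zero_le_one
      show g (idx p) p = g j p
      simp only [hgdef, habs1, habs2, hproj1]
      show H (p.1, 1) (idx p) = H (p.1, 1) j
      rw [hy]
  -- continuity by gluing over the closed cover
  have hK : Continuous K := by
    apply (locallyFinite_of_finite
      (fun j : Fin r => {p : U × unitInterval | |x p - 2 * ((j : ℕ) : ℝ)| ≤ 1})).continuous
    · ext p
      simp only [Set.mem_iUnion, Set.mem_setOf_eq, Set.mem_univ, iff_true]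
      refine ⟨idx p, ?_⟩
      rw [hidx_val p]; exact hmem p
    · intro j
      have : {p : U × unitInterval | |x p - 2 * ((j : ℕ) : ℝ)| ≤ 1}
          = (fun p => |x p - 2 * ((j : ℕ) : ℝ)|) ⁻¹' Set.Iic 1 := rfl
      rw [this]
      exact IsClosed.preimage ((hxcont.sub continuous_const).abs) isClosed_Iic
    · intro j
      exact (hg j).continuousOn.congr fun p hp => key j p hp
  refine ⟨ContinuousMap.curry ⟨K, hK⟩, fun u j => ?_⟩
  have hjn : (j : ℕ) ≤ n := by have := j.isLt; omega
  have hrn' : (r : ℝ) - 1 = (n : ℝ) := by rw [hrn]; push_cast; ring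
  have hxval : x (u, seqTime hr j) = 2 * ((j : ℕ) : ℝ) := by
    show ((j : ℕ) : ℝ) / ((r : ℝ) - 1) * (2 * n) = 2 * ((j : ℕ) : ℝ)
    rw [hrn']; field_simp
  have hm : ⌊(x (u, seqTime hr j) + 1) / 2⌋₊ = (j : ℕ) := by
    rw [hxval, Nat.floor_eq_iff (by positivity)]
    constructor <;> linarith
  have hidxq : idx (u, seqTime hr j) = j := by
    apply Fin.ext; rw [hidx_val _, hm]
  show g (idx (u, seqTime hr j)) (u, seqTime hr j) = f (u.1 j)
  rw [hidxq]
  simp only [hgdef]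
  rw [hxval]
  have habs0 : |(2 : ℝ) * ((j : ℕ) : ℝ) - 2 * ((j : ℕ) : ℝ)| = 0 := by simp
  rw [habs0]
  have hproj0 : Set.projIcc (0:ℝ) 1 zero_le_one (0:ℝ) = (0 : unitInterval) :=
    Set.projIcc_left zero_le_one
  rw [hproj0]
  show H (u, 0) j = f (u.1 j)
  rw [hH0 u]
end

section
/- Let f : X → Y be a continuous map of topological spaces, let r ≥ 2, and let U ⊆ X^r. The following are equivalent: (1) there exists a sequential f-motion planner on U; (2) the r maps U → Y given by (x_0, …, x_{r-1}) ↦ f(x_j), for j = 0, …, r-1, are all pairwise homotopic; (3) the restriction of f^r = f × ⋯ × f to U can be deformed into the diagonal ΔY of Y^r, i.e. there is a homotopy H : U × [0,1] → Y^r with H(x̄, 0) = f^r(x̄) and H(x̄, 1) ∈ ΔY for all x̄ ∈ U. -/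
/-
Gluing a chain of homotopies `f₀ ≃ f₁ ≃ ⋯ ≃ fₙ` end to end over the intervals `[j, j+1]` gives a
map `ℝ × Z → Y` passing through `f j` at time `j`; rescaling time by `r - 1` turns it into a
sequential motion planner. Conversely, following a motion planner from time `j/(r-1)` to time
`j'/(r-1)` is a homotopy between the `j`-th and `j'`-th coordinate maps. Homotopies from all
coordinates to one map `g` are the same as a homotopy of `f^r` to the diagonal map
`x̄ ↦ (g x̄, …, g x̄)`.
-/

namespace ContinuousMap

variable {Z Y : Type*} [TopologicalSpace Z] [TopologicalSpace Y]

theorem homotopic_of_joined_of_eq_eval {T : Type*} [TopologicalSpace T] [LocallyCompactSpace T]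
    (F : C(Z, C(T, Y))) {s t : T} (hst : Joined s t) {f₀ f₁ : C(Z, Y)} (h₀ : ∀ z, f₀ z = F z s)
    (h₁ : ∀ z, f₁ z = F z t) : f₀.Homotopic f₁ := by
  let γ := hst.somePath
  exact ⟨{ toFun := fun q => F q.2 (γ q.1)
           continuous_toFun := continuous_eval.comp ((F.continuous.comp continuous_snd).prodMk
             (γ.continuous.comp continuous_fst))
           map_zero_left := fun z => by simp [h₀]
           map_one_left := fun z => by simp [h₁] }⟩

theorem exists_continuous_through_homotopic_chain (f : ℕ → C(Z, Y)) (n : ℕ)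
    (h : ∀ j < n, (f j).Homotopic (f (j + 1))) :
    ∃ G : C(ℝ × Z, Y), ∀ j ≤ n, ∀ z, G ((j : ℝ), z) = f j z := by
  induction n with
  | zero => exact ⟨(f 0).comp ContinuousMap.snd, by simp⟩
  | succ n ih =>
    obtain ⟨G, hG⟩ := ih fun j hj => h j (by omega)
    let K := (h n n.lt_succ_self).some
    let toUnit : ℝ → unitInterval := fun x => Set.projIcc 0 1 zero_le_one (x - n)
    have hG_n : ∀ z, G ((n : ℝ), z) = K (toUnit n, z) := fun z => by
      simp [toUnit, hG n le_rfl z]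
    refine ⟨⟨fun p => if p.1 ≤ n then G p else K (toUnit p.1, p.2), ?_⟩, fun j hj z => ?_⟩
    · refine G.continuous.if_le (K.continuous.comp ?_) continuous_fst continuous_const ?_
      · fun_prop
      · rintro ⟨x, z⟩ (rfl : x = n)
        exact hG_n z
    · rcases Nat.le_succ_iff.mp hj with hj | rfl
      · have hjn : (j : ℝ) ≤ n := by exact_mod_cast hj
        simp [hjn, hG j hj]
      · have h_one : toUnit (n + 1) = 1 := by simp [toUnit, Set.projIcc_of_right_le]
        simp [h_one]

theorem homotopic_pairwise_iff_exists_homotopic_pi_const {ι : Type*} [Nonempty ι]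
    (f : ι → C(Z, Y)) :
    (∀ i j, (f i).Homotopic (f j)) ↔
      ∃ g : C(Z, Y), (ContinuousMap.pi f).Homotopic (ContinuousMap.pi fun _ => g) := by
  constructor
  · intro h
    let i₀ := Classical.arbitrary ι
    exact ⟨f i₀, ⟨Homotopy.pi fun i => (h i i₀).some⟩⟩
  · rintro ⟨g, hg⟩
    have hf_g : ∀ i, (f i).Homotopic g := fun i => (Homotopic.refl (eval i)).comp hg
    exact fun i j => (hf_g i).trans (hf_g j).symm

theorem exists_deformation_into_diagonal_iff {ι : Type*} [Nonempty ι] (F : C(Z, ι → Y)) :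
    (∃ H : C(Z × unitInterval, ι → Y),
        (∀ z, H (z, 0) = F z) ∧ ∀ z, ∃ y : Y, H (z, 1) = fun _ => y) ↔
      ∃ g : C(Z, Y), F.Homotopic (ContinuousMap.pi fun _ => g) := by
  constructor
  · rintro ⟨H, h₀, h₁⟩
    let i₀ := Classical.arbitrary ι
    refine ⟨(eval i₀).comp (H.comp ⟨fun z => (z, 1), by fun_prop⟩), ⟨
      { toContinuousMap := H.comp ⟨Prod.swap, continuous_swap⟩
        map_zero_left := h₀
        map_one_left := fun z => ?_ }⟩⟩
    obtain ⟨y, hy⟩ := h₁ z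
    simp [hy]
  · rintro ⟨g, ⟨K⟩⟩
    exact ⟨K.toContinuousMap.comp ⟨Prod.swap, continuous_swap⟩, K.apply_zero,
      fun z => ⟨_, K.apply_one z⟩⟩

end ContinuousMap

open ContinuousMap

instance unitInterval.instPathConnectedSpace : PathConnectedSpace unitInterval :=
  isPathConnected_iff_pathConnectedSpace.mp ((convex_Icc 0 1).isPathConnected ⟨0, by simp⟩)

section SequentialMotionPlanner

variable {X Y : Type*} [TopologicalSpace X] [TopologicalSpace Y] (f : C(X, Y)) {r : ℕ}
  (hr : 2 ≤ r) (U : Set (Fin r → X))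

theorem homotopic_coordMap_of_planner (F : C(U, C(unitInterval, Y)))
    (hF : ∀ (u : U) (j : Fin r), F u (seqTime hr j) = f (u.1 j)) (j j' : Fin r) :
    (coordMap f U j).Homotopic (coordMap f U j') :=
  homotopic_of_joined_of_eq_eval F (PathConnectedSpace.joined _ _) (fun u => (hF u j).symm)
    (fun u => (hF u j').symm)

theorem exists_planner_of_homotopic_coordMap
    (h : ∀ j j' : Fin r, (coordMap f U j).Homotopic (coordMap f U j')) :
    ∃ F : C(U, C(unitInterval, Y)), ∀ (u : U) (j : Fin r), F u (seqTime hr j) = f (u.1 j) := by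
  obtain ⟨n, rfl⟩ : ∃ n, r = n + 1 := ⟨r - 1, by omega⟩
  obtain ⟨G, hG⟩ := exists_continuous_through_homotopic_chain
    (fun k => coordMap f U (Fin.ofNat (n + 1) k)) n fun _ _ => h _ _
  let rescale : C(U × unitInterval, ℝ × U) := ⟨fun p => ((p.2 : ℝ) * n, p.1), by fun_prop⟩
  refine ⟨(G.comp rescale).curry, fun u j => ?_⟩
  have hn : (n : ℝ) ≠ 0 := by exact_mod_cast (show n ≠ 0 by omega)
  have h_time : (seqTime hr j : ℝ) * n = (j : ℕ) := by simp [seqTime, hn]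
  change G ((seqTime hr j : ℝ) * n, u) = _
  rw [h_time, hG j (Nat.lt_succ_iff.mp j.isLt) u, Fin.ofNat_val_eq_self]
  rfl

end SequentialMotionPlanner

/-- For a continuous map `f : X → Y`, `r ≥ 2` and `U ⊆ X^r`, the
following are equivalent: (1) there is a sequential `f`-motion planner on `U`;
(2) the `r` coordinate maps `x̄ ↦ f (x̄ j)` of `f^r` on `U` are pairwise homotopic;
(3) `f^r|_U` can be deformed into the diagonal `ΔY ⊆ Y^r`. -/
theorem stmt10 {X Y : Type*} [TopologicalSpace X] [TopologicalSpace Y] (f : C(X, Y))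
    {r : ℕ} (hr : 2 ≤ r) (U : Set (Fin r → X)) :
    ((∃ F : C(U, C(unitInterval, Y)),
        ∀ (u : U) (j : Fin r), F u (seqTime hr j) = f (u.1 j)) ↔
      (∀ j j' : Fin r, ContinuousMap.Homotopic (coordMap f U j) (coordMap f U j'))) ∧
    ((∀ j j' : Fin r, ContinuousMap.Homotopic (coordMap f U j) (coordMap f U j')) ↔
      (∃ H : C(U × unitInterval, Fin r → Y),
        (∀ u : U, H (u, 0) = fun j => f (u.1 j)) ∧
        (∀ u : U, ∃ y : Y, H (u, 1) = fun _ => y))) := by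
  refine ⟨⟨fun ⟨F, hF⟩ => homotopic_coordMap_of_planner f hr U F hF,
    exists_planner_of_homotopic_coordMap f hr U⟩, ?_⟩
  have : Nonempty (Fin r) := ⟨⟨0, by omega⟩⟩
  exact (homotopic_pairwise_iff_exists_homotopic_pi_const (coordMap f U)).trans
    (exists_deformation_into_diagonal_iff (ContinuousMap.pi (coordMap f U))).symm
end

section
/- Let f : X → Y be a continuous map of topological spaces, X' ⊆ X and Y' ⊆ Y subspaces with f(X') ⊆ Y', and let f' : X' → Y' be the restriction of f. Suppose there exist continuous retractions r_X : X → X' and r_Y : Y → Y' (identity on X' and Y' respectively) with r_Y ∘ f = f' ∘ r_X (i.e. f' is a retract of f). Let r ≥ 2. If X^r can be covered by n+1 open sets U_0, …, U_n, each admitting a sequential f-motion planner, then (X')^r can be covered by n+1 open sets V_0, …, V_n, each admitting a sequential f'-motion planner. In particular TC_r(f') ≤ TC_r(f). -/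
/-- The restriction `f' : X' → Y'` of a continuous map `f : X → Y` to subspaces `X' ⊆ X`,
`Y' ⊆ Y` with `f(X') ⊆ Y'`. -/
def restrictMap {X Y : Type*} [TopologicalSpace X] [TopologicalSpace Y]
    (f : C(X, Y)) (X' : Set X) (Y' : Set Y) (h : Set.MapsTo f X' Y') : C(X', Y') :=
  ⟨fun x => ⟨f x, h x.2⟩, Continuous.subtype_mk (f.continuous.comp continuous_subtype_val) _⟩

/-
If `h ∘ f ∘ g = f'`, a sequential `f`-motion planner on `U ⊆ X^r` induces one for `f'` on the
preimage of `U` under `g^r`: apply `g` to each point, plan in `Y`, and push the path to `Y'`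
with `h`. A retraction `f'` of `f` is of this form, with `g` the inclusion `X' ⊆ X` and `h = rY`.
-/

open ContinuousMap

section SeqMotionPlanner

variable {X Y X' Y' : Type*} [TopologicalSpace X] [TopologicalSpace Y]
  [TopologicalSpace X'] [TopologicalSpace Y'] {r : ℕ} (hr : 2 ≤ r)

def IsSeqMotionPlanner (f : X → Y) {U : Set (Fin r → X)} (F : C(U, C(unitInterval, Y))) :
    Prop :=
  ∀ (u : U) (j : Fin r), F u (seqTime hr j) = f (u.1 j)

def HasSeqMotionPlannerCover (ι : Type*) (f : X → Y) : Prop :=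
  ∃ U : ι → Set (Fin r → X), (∀ i, IsOpen (U i)) ∧ ⋃ i, U i = Set.univ ∧
    ∀ i, ∃ F : C(U i, C(unitInterval, Y)), IsSeqMotionPlanner hr f F

variable {hr} {f : X → Y} {f' : X' → Y'} (g : C(X', X)) (h : C(Y, Y'))

theorem IsSeqMotionPlanner.exists_pullback (hfg : ∀ x, h (f (g x)) = f' x)
    {U : Set (Fin r → X)} {F : C(U, C(unitInterval, Y))} (hF : IsSeqMotionPlanner hr f F) :
    ∃ F' : C(piMap (fun _ => g) ⁻¹' U, C(unitInterval, Y')), IsSeqMotionPlanner hr f' F' := by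
  let G := F.comp (restrictPreimage (piMap fun _ => g) U)
  refine ⟨⟨fun v => h.comp (G v), (continuous_postcomp h).comp G.continuous⟩, fun v j => ?_⟩
  change h (F _ (seqTime hr j)) = f' (v.1 j)
  rw [hF]
  exact hfg (v.1 j)

theorem HasSeqMotionPlannerCover.pullback {ι : Type*} (hf : HasSeqMotionPlannerCover hr ι f)
    (hfg : ∀ x, h (f (g x)) = f' x) : HasSeqMotionPlannerCover hr ι f' := by
  obtain ⟨U, hUopen, hUcover, hUplan⟩ := hf
  refine ⟨fun i => piMap (fun _ => g) ⁻¹' U i, fun i => (hUopen i).preimage (map_continuous _),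
    by rw [← Set.preimage_iUnion, hUcover, Set.preimage_univ], fun i => ?_⟩
  obtain ⟨F, hF⟩ := hUplan i
  exact hF.exists_pullback g h hfg

end SeqMotionPlanner

theorem retraction_comp_apply_coe {X Y : Type*} [TopologicalSpace X] [TopologicalSpace Y]
    (f : C(X, Y)) (X' : Set X) (Y' : Set Y) (hf : Set.MapsTo f X' Y')
    (rX : C(X, X')) (rY : C(Y, Y')) (hrX : ∀ x : X', rX ↑x = x)
    (hcomm : ∀ x : X, rY (f x) = restrictMap f X' Y' hf (rX x)) (x : X') :
    rY (f x) = restrictMap f X' Y' hf x := by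
  rw [hcomm, hrX]

theorem stmt11_general {X Y : Type*} [TopologicalSpace X] [TopologicalSpace Y]
    (f : C(X, Y)) (X' : Set X) (Y' : Set Y) (hf : Set.MapsTo f X' Y')
    (rX : C(X, X')) (rY : C(Y, Y'))
    (hrX : ∀ x : X', rX ↑x = x)
    (hcomm : ∀ x : X, rY (f x) = restrictMap f X' Y' hf (rX x))
    {r : ℕ} (hr : 2 ≤ r) (n : ℕ)
    (U : Fin (n + 1) → Set (Fin r → X))
    (hUopen : ∀ i, IsOpen (U i))
    (hUcover : ⋃ i, U i = Set.univ)
    (hUplan : ∀ i, ∃ F : C(U i, C(unitInterval, Y)),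
      ∀ (u : U i) (j : Fin r), F u (seqTime hr j) = f (u.1 j)) :
    ∃ V : Fin (n + 1) → Set (Fin r → X'),
      (∀ i, IsOpen (V i)) ∧ (⋃ i, V i = Set.univ) ∧
      (∀ i, ∃ F : C(V i, C(unitInterval, Y')),
        ∀ (v : V i) (j : Fin r), F v (seqTime hr j) = restrictMap f X' Y' hf (v.1 j)) :=
  HasSeqMotionPlannerCover.pullback (restrict X' (.id X)) rY ⟨U, hUopen, hUcover, hUplan⟩
    (retraction_comp_apply_coe f X' Y' hf rX rY hrX hcomm)

/-- **Statement 11.** Let `f' : X' → Y'` be the restriction of `f : X → Y` to subspaces,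
and suppose there are continuous retractions `rX : X → X'`, `rY : Y → Y'` with
`rY ∘ f = f' ∘ rX` (so `f'` is a retract of `f`).  Let `r ≥ 2`.  If `X^r` is covered by
`n + 1` open sets each admitting a sequential `f`-motion planner, then `(X')^r` is covered
by `n + 1` open sets each admitting a sequential `f'`-motion planner.
(In particular `TC_r(f') ≤ TC_r(f)`.) -/
theorem stmt11 {X Y : Type*} [TopologicalSpace X] [TopologicalSpace Y]
    (f : C(X, Y)) (X' : Set X) (Y' : Set Y) (hf : Set.MapsTo f X' Y')
    (rX : C(X, X')) (rY : C(Y, Y'))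
    (hrX : ∀ x : X', rX ↑x = x) (hrY : ∀ y : Y', rY ↑y = y)
    (hcomm : ∀ x : X, rY (f x) = restrictMap f X' Y' hf (rX x))
    {r : ℕ} (hr : 2 ≤ r) (n : ℕ)
    (U : Fin (n + 1) → Set (Fin r → X))
    (hUopen : ∀ i, IsOpen (U i))
    (hUcover : ⋃ i, U i = Set.univ)
    (hUplan : ∀ i, ∃ F : C(U i, C(unitInterval, Y)),
      ∀ (u : U i) (j : Fin r), F u (seqTime hr j) = f (u.1 j)) :
    ∃ V : Fin (n + 1) → Set (Fin r → X'),
      (∀ i, IsOpen (V i)) ∧ (⋃ i, V i = Set.univ) ∧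
      (∀ i, ∃ F : C(V i, C(unitInterval, Y')),
        ∀ (v : V i) (j : Fin r), F v (seqTime hr j) = restrictMap f X' Y' hf (v.1 j)) :=
  stmt11_general f X' Y' hf rX rY hrX hcomm hr n U hUopen hUcover hUplan
end

section
/- Let f : X → Y be a continuous map of topological spaces, X' ⊆ X and Y' ⊆ Y subspaces with f(X') ⊆ Y', and let f' : X' → Y' be the restriction of f. Suppose there exist continuous retractions r_X : X → X' and r_Y : Y → Y' with r_Y ∘ f = f' ∘ r_X. If X × X can be covered by n+1 open sets U_0, …, U_n such that on each U_i there is a continuous map s_i : U_i → Y^{[0,1]} with s_i(x_0, x_1)(0) = f(x_0) and s_i(x_0, x_1)(1) = f(x_1) for all (x_0, x_1) ∈ U_i, then X' × X' can be covered by n+1 open sets with the analogous property for f'. In particular TC(f') ≤ TC(f) for Scott's topological complexity of maps. -/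
/-- **Statement 12.** Let `f' : X' → Y'` be the restriction of `f : X → Y` to subspaces,
with continuous retractions `rX : X → X'`, `rY : Y → Y'` satisfying `rY ∘ f = f' ∘ rX`.
If `X × X` is covered by `n + 1` open sets on each of which there is a continuous
`s : U → Y^{[0,1]}` with `s (x₀, x₁) 0 = f x₀` and `s (x₀, x₁) 1 = f x₁`, then `X' × X'`
is covered by `n + 1` open sets with the analogous property for `f'`.
(In particular `TC(f') ≤ TC(f)` for Scott's topological complexity of maps.) -/
theorem stmt12 {X Y : Type*} [TopologicalSpace X] [TopologicalSpace Y]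
    (f : C(X, Y)) (X' : Set X) (Y' : Set Y) (hf : Set.MapsTo f X' Y')
    (rX : C(X, X')) (rY : C(Y, Y'))
    (hrX : ∀ x : X', rX ↑x = x) (hrY : ∀ y : Y', rY ↑y = y)
    (hcomm : ∀ x : X, rY (f x) = restrictMap f X' Y' hf (rX x))
    (n : ℕ)
    (U : Fin (n + 1) → Set (X × X))
    (hUopen : ∀ i, IsOpen (U i))
    (hUcover : ⋃ i, U i = Set.univ)
    (hUplan : ∀ i, ∃ s : C(U i, C(unitInterval, Y)),
      ∀ u : U i, s u 0 = f u.1.1 ∧ s u 1 = f u.1.2) :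
    ∃ V : Fin (n + 1) → Set (X' × X'),
      (∀ i, IsOpen (V i)) ∧ (⋃ i, V i = Set.univ) ∧
      (∀ i, ∃ s : C(V i, C(unitInterval, Y')),
        ∀ v : V i, s v 0 = restrictMap f X' Y' hf v.1.1 ∧
          s v 1 = restrictMap f X' Y' hf v.1.2) := by
  set ι : X' × X' → X × X := fun p => (↑p.1, ↑p.2) with hι
  have hιc : Continuous ι := (continuous_subtype_val.comp continuous_fst).prodMk (continuous_subtype_val.comp continuous_snd)
  refine ⟨fun i => ι ⁻¹' U i, fun i => (hUopen i).preimage hιc, ?_, ?_⟩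
  · ext p
    simp only [Set.mem_iUnion, Set.mem_preimage, Set.mem_univ, iff_true]
    have : ι p ∈ ⋃ i, U i := by rw [hUcover]; trivial
    simpa using this
  · intro i
    obtain ⟨s, hs⟩ := hUplan i
    have hinc : Continuous (fun v : (ι ⁻¹' U i) => (⟨ι v.1, v.2⟩ : U i)) := by
      exact (hιc.comp continuous_subtype_val).subtype_mk _
    refine ⟨⟨fun v => rY.comp (s ⟨ι v.1, v.2⟩), ?_⟩, ?_⟩
    · exact (ContinuousMap.continuous_postcomp rY).comp (s.continuous.comp hinc)
    · intro v
      have h0 := (hs ⟨ι v.1, v.2⟩).1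
      have h1 := (hs ⟨ι v.1, v.2⟩).2
      constructor
      · show rY (s ⟨ι v.1, v.2⟩ 0) = _
        rw [h0]
        show rY (f ↑v.1.1) = _
        rw [hcomm, hrX]
      · show rY (s ⟨ι v.1, v.2⟩ 1) = _
        rw [h1]
        show rY (f ↑v.1.2) = _
        rw [hcomm, hrX]
end
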